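/- For every nonnegative integer k and every real z > 0, the modified Bessel function of the first kind satisfies z^{-k} I_k(z) ≤ sqrt(π/8) · (k² + z²)^{-1/4} · (k + sqrt(k² + z²))^{-k} · exp(sqrt(k² + z²)). -/

import Mathlib

/-!
Let `C_k(a, b) = ∑_q a^(q+k) b^q / ((q+k)! q!)` be the `k`-th Laurent coefficient of
`exp (a w + b / w)`. Then `I_k(z) = C_k(z/2, z/2)`, and `C_k` is homogeneous:
`C_k(c a, b / c) = c^k C_k(a, b)`. With `s = √(k² + z²)` this gives
`z^(-k) I_k(z) = (k + s)^(-k) C_k((s + k)/2, (s - k)/2)`, where the two arguments have sum `s`.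
On the unit circle, `2π C_k(a, b) = ∫_{-π}^{π} exp (a e^{iθ} + b e^{-iθ} - ikθ) dθ`, and for
real `a, b` the integrand has modulus `exp ((a + b) cos θ)`. Finally `cos θ ≤ 1 - 2θ²/π²` on
`[-π, π]` and the Gaussian integral give `∫_{-π}^{π} exp (s cos θ) dθ ≤ π √(π / (2s)) e^s`.
-/

open Real

/-- The modified Bessel function of the first kind of integer order `k`:
`I_k(z) = Σ_{m≥0} (z/2)^(2m+k) / (m! (m+k)!)`. -/
noncomputable def besselI (k : ℕ) (z : ℝ) : ℝ :=
  ∑' m : ℕ, (z / 2) ^ (2 * m + k) / ((m.factorial : ℝ) * ((m + k).factorial : ℝ))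

open MeasureTheory Nat
open Complex (I)
open scoped Complex

lemma hasSum_pow_div_factorial_mul_pow_div_factorial (x y : ℂ) :
    HasSum (fun pq : ℕ × ℕ ↦ x ^ pq.1 / pq.1 ! * (y ^ pq.2 / pq.2 !)) (cexp (x + y)) := by
  have hexp (w : ℂ) : HasSum (fun n : ℕ ↦ w ^ n / n !) (cexp w) := by
    rw [Complex.exp_eq_exp_ℂ]
    exact NormedSpace.expSeries_div_hasSum_exp w
  have hnorm (w : ℂ) : Summable fun n : ℕ ↦ ‖w ^ n / (n ! : ℂ)‖ :=
    NormedSpace.norm_expSeries_div_summable w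
  have hsummable := summable_mul_of_summable_norm (hnorm x) (hnorm y)
  have hmul := (hexp x).mul (hexp y) hsummable
  rwa [← Complex.exp_add] at hmul

lemma intervalIntegral_exp_int_mul_I (n : ℤ) :
    ∫ θ in -π..π, cexp (n * θ * I) = if n = 0 then (2 * π : ℂ) else 0 := by
  split_ifs with hn
  · simp only [hn, Int.cast_zero, zero_mul, Complex.exp_zero, intervalIntegral.integral_const,
      sub_neg_eq_add, Complex.real_smul, Complex.ofReal_add, mul_one]
    ring
  · have hnI : (n : ℂ) * I ≠ 0 := by simp [hn]
    have hperiodic : cexp (n * I * π) = cexp (n * I * (-π : ℝ)) := by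
      rw [← mul_one (cexp (n * I * (-π : ℝ))), ← Complex.exp_int_mul_two_pi_mul_I n,
        ← Complex.exp_add]
      push_cast
      ring_nf
    simp_rw [mul_right_comm _ _ I]
    rw [integral_exp_mul_complex hnI, hperiodic, sub_self, zero_div]

lemma intervalIntegral_exp_mul_cos_le {s : ℝ} (hs : 0 < s) :
    ∫ θ in -π..π, rexp (s * cos θ) ≤ π * √(π / (2 * s)) * rexp s := by
  have hc : 0 < 2 * s / π ^ 2 := by positivity
  have hπ : -π ≤ π := by linarith [pi_pos]
  have hgauss_bound : ∀ θ ∈ Set.Icc (-π) π,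
      rexp (s * cos θ) ≤ rexp s * rexp (-(2 * s / π ^ 2) * θ ^ 2) := by
    intro θ hθ
    have hcos := cos_le_one_sub_mul_cos_sq (abs_le.2 hθ)
    rw [← Real.exp_add, Real.exp_le_exp]
    calc s * cos θ ≤ s * (1 - 2 / π ^ 2 * θ ^ 2) := mul_le_mul_of_nonneg_left hcos hs.le
      _ = s + -(2 * s / π ^ 2) * θ ^ 2 := by ring
  have hgauss_integral :
      ∫ θ in -π..π, rexp (-(2 * s / π ^ 2) * θ ^ 2) ≤ π * √(π / (2 * s)) := by
    calc ∫ θ in -π..π, rexp (-(2 * s / π ^ 2) * θ ^ 2)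
        ≤ ∫ θ, rexp (-(2 * s / π ^ 2) * θ ^ 2) := by
          rw [intervalIntegral.integral_of_le hπ]
          exact setIntegral_le_integral (integrable_exp_neg_mul_sq hc)
            (.of_forall fun _ ↦ (Real.exp_pos _).le)
      _ = π * √(π / (2 * s)) := by
          rw [integral_gaussian, show π / (2 * s / π ^ 2) = π ^ 2 * (π / (2 * s)) by field_simp,
            Real.sqrt_mul (by positivity), Real.sqrt_sq pi_pos.le]
  calc ∫ θ in -π..π, rexp (s * cos θ)
      ≤ ∫ θ in -π..π, rexp s * rexp (-(2 * s / π ^ 2) * θ ^ 2) :=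
        intervalIntegral.integral_mono_on hπ
          ((by fun_prop : Continuous _).intervalIntegrable _ _)
          ((by fun_prop : Continuous _).intervalIntegrable _ _) hgauss_bound
    _ ≤ π * √(π / (2 * s)) * rexp s := by
        rw [intervalIntegral.integral_const_mul, mul_comm]
        exact mul_le_mul_of_nonneg_right hgauss_integral (Real.exp_pos _).le

lemma sqrt_div_sqrt_eq_mul_rpow (c : ℝ) {u : ℝ} (hu : 0 ≤ u) :
    √(c / √u) = √c * u ^ (-(1 / 4 : ℝ)) := by
  have hfourth : √(√u) = u ^ (1 / 4 : ℝ) := by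
    rw [Real.sqrt_eq_rpow, Real.sqrt_eq_rpow, ← Real.rpow_mul hu]
    norm_num
  rw [Real.sqrt_div' _ (Real.sqrt_nonneg u), hfourth, Real.rpow_neg hu, div_eq_mul_inv]

section

variable {𝕜 : Type*} [RCLike 𝕜]

noncomputable def expLaurentCoeff (a b : 𝕜) (k : ℕ) : 𝕜 :=
  ∑' q : ℕ, a ^ (q + k) * b ^ q / ((q + k)! * q !)

lemma expLaurentCoeff_mul_div (a b : 𝕜) {c : 𝕜} (hc : c ≠ 0) (k : ℕ) :
    expLaurentCoeff (c * a) (b / c) k = c ^ k * expLaurentCoeff a b k := by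
  rw [expLaurentCoeff, expLaurentCoeff, ← tsum_mul_left]
  congr 1 with q
  rw [mul_pow, div_pow, pow_add c]
  field_simp

end

lemma ofReal_expLaurentCoeff (a b : ℝ) (k : ℕ) :
    ((expLaurentCoeff a b k : ℝ) : ℂ) = expLaurentCoeff (a : ℂ) b k := by
  rw [expLaurentCoeff, expLaurentCoeff, Complex.ofReal_tsum]
  push_cast
  rfl

lemma besselI_eq_expLaurentCoeff (k : ℕ) (z : ℝ) :
    besselI k z = expLaurentCoeff (z / 2) (z / 2) k := by
  rw [besselI, expLaurentCoeff]
  congr 1 with m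
  rw [show 2 * m + k = (m + k) + m by ring, pow_add, mul_comm (m ! : ℝ)]

lemma besselI_eq_mul_expLaurentCoeff (k : ℕ) {z a b : ℝ} (hz : z ≠ 0) (ha : a ≠ 0)
    (hab : a * b = (z / 2) ^ 2) :
    besselI k z = (z / (2 * a)) ^ k * expLaurentCoeff a b k := by
  have hc : 2 * a / z ≠ 0 := by positivity
  rw [besselI_eq_expLaurentCoeff, show a = 2 * a / z * (z / 2) by field_simp,
    show b = z / 2 / (2 * a / z) by field_simp; linear_combination 4 * hab,
    expLaurentCoeff_mul_div _ _ hc, ← mul_assoc, ← mul_pow]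
  field_simp
  simp

noncomputable def expLaurentIntegrand (a b : ℂ) (k : ℕ) (θ : ℝ) : ℂ :=
  cexp (a * cexp (θ * I) + b * cexp (-(θ * I)) - k * θ * I)

noncomputable def expLaurentTerm (a b : ℂ) (k : ℕ) (pq : ℕ × ℕ) (θ : ℝ) : ℂ :=
  a ^ pq.1 / pq.1 ! * (b ^ pq.2 / pq.2 !) * cexp (((pq.1 : ℤ) - pq.2 - k : ℤ) * θ * I)

lemma hasSum_expLaurentTerm (a b : ℂ) (k : ℕ) (θ : ℝ) :
    HasSum (fun pq ↦ expLaurentTerm a b k pq θ)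
      (expLaurentIntegrand a b k θ) := by
  have hphase (p q : ℕ) : cexp (((p : ℤ) - q - k : ℤ) * θ * I)
      = cexp (θ * I) ^ p * cexp (-(θ * I)) ^ q * cexp (-(k * θ * I)) := by
    rw [← Complex.exp_nat_mul, ← Complex.exp_nat_mul, ← Complex.exp_add, ← Complex.exp_add]
    congr 1
    push_cast
    ring
  have := (hasSum_pow_div_factorial_mul_pow_div_factorial (a * cexp (θ * I))
    (b * cexp (-(θ * I)))).mul_right (cexp (-(k * θ * I)))
  rw [← Complex.exp_add, ← sub_eq_add_neg] at this
  refine this.congr_fun fun ⟨p, q⟩ ↦ ?_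
  rw [expLaurentTerm, hphase]
  ring

lemma norm_expLaurentTerm (a b : ℂ) (k : ℕ) (pq : ℕ × ℕ) (θ : ℝ) :
    ‖expLaurentTerm a b k pq θ‖ = ‖a‖ ^ pq.1 / pq.1 ! * (‖b‖ ^ pq.2 / pq.2 !) := by
  rw [expLaurentTerm, norm_mul, ← Complex.ofReal_intCast, ← Complex.ofReal_mul,
    Complex.norm_exp_ofReal_mul_I]
  simp

lemma intervalIntegral_expLaurentTerm (a b : ℂ) (k p q : ℕ) :
    ∫ θ in -π..π, expLaurentTerm a b k (p, q) θ
      = if p = q + k then (2 * π : ℂ) * (a ^ p / p ! * (b ^ q / q !)) else 0 := by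
  simp only [expLaurentTerm, intervalIntegral.integral_const_mul, intervalIntegral_exp_int_mul_I]
  have : ((p : ℤ) - q - k = 0) ↔ p = q + k := by omega
  simp only [this]
  split_ifs <;> ring

lemma intervalIntegral_expLaurentIntegrand (a b : ℂ) (k : ℕ) :
    ∫ θ in -π..π, expLaurentIntegrand a b k θ
      = 2 * π * expLaurentCoeff a b k := by
  have hπ : -π ≤ π := by linarith [pi_pos]
  have hint (pq : ℕ × ℕ) :
      Integrable (expLaurentTerm a b k pq) (volume.restrict (Set.Ioc (-π) π)) :=
    (by unfold expLaurentTerm; fun_prop : Continuous (expLaurentTerm a b k pq)).integrableOn_Ioc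
  have hnorm_int (pq : ℕ × ℕ) : ∫ θ in Set.Ioc (-π) π, ‖expLaurentTerm a b k pq θ‖
      = 2 * π * (‖a‖ ^ pq.1 / pq.1 ! * (‖b‖ ^ pq.2 / pq.2 !)) := by
    simp_rw [norm_expLaurentTerm, ← intervalIntegral.integral_of_le hπ,
      intervalIntegral.integral_const, smul_eq_mul]
    ring
  have hsum :
      Summable fun pq : ℕ × ℕ ↦ ∫ θ in Set.Ioc (-π) π, ‖expLaurentTerm a b k pq θ‖ := by
    simp_rw [hnorm_int]
    exact ((Real.summable_pow_div_factorial _).mul_of_nonneg (Real.summable_pow_div_factorial _)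
      (fun _ ↦ by positivity) (fun _ ↦ by positivity)).mul_left _
  have hswap := hasSum_integral_of_summable_integral_norm hint hsum
  simp_rw [← intervalIntegral.integral_of_le hπ,
    fun θ ↦ (hasSum_expLaurentTerm a b k θ).tsum_eq] at hswap
  have hdiag : Function.Injective fun q : ℕ ↦ (q + k, q) := fun _ _ h ↦ (Prod.ext_iff.1 h).2
  rw [← hdiag.hasSum_iff] at hswap
  · rw [← hswap.tsum_eq, expLaurentCoeff, ← tsum_mul_left]
    congr 1 with q
    simp only [Function.comp_apply, intervalIntegral_expLaurentTerm, if_true]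
    field_simp
  · rintro ⟨p, q⟩ hpq
    rw [intervalIntegral_expLaurentTerm, if_neg]
    rintro rfl
    exact hpq ⟨q, rfl⟩

lemma norm_expLaurentIntegrand (a b : ℝ) (k : ℕ) (θ : ℝ) :
    ‖expLaurentIntegrand a b k θ‖ = rexp ((a + b) * cos θ) := by
  rw [expLaurentIntegrand, Complex.norm_exp]
  congr 1
  simp only [Complex.sub_re, Complex.add_re, Complex.mul_re, Complex.ofReal_re, Complex.exp_re,
    Complex.I_re, mul_zero, Complex.ofReal_im, Complex.I_im, mul_one, sub_self, exp_zero,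
    Complex.mul_im, add_zero, one_mul, Complex.exp_im, zero_mul, sub_zero, Complex.neg_re,
    neg_zero, Complex.neg_im, cos_neg, sin_neg, mul_neg, Complex.natCast_re, Complex.natCast_im]
  ring

lemma expLaurentCoeff_le_intervalIntegral (a b : ℝ) (k : ℕ) :
    2 * π * expLaurentCoeff a b k ≤ ∫ θ in -π..π, rexp ((a + b) * cos θ) := by
  calc 2 * π * expLaurentCoeff a b k
      ≤ ‖((2 * π * expLaurentCoeff a b k : ℝ) : ℂ)‖ := by
        rw [Complex.norm_real]
        exact le_abs_self _
    _ = ‖∫ θ in -π..π, expLaurentIntegrand a b k θ‖ := by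
        rw [intervalIntegral_expLaurentIntegrand, ← ofReal_expLaurentCoeff]
        norm_cast
    _ ≤ ∫ θ in -π..π, ‖expLaurentIntegrand a b k θ‖ :=
        intervalIntegral.norm_integral_le_integral_norm (by linarith [pi_pos])
    _ = ∫ θ in -π..π, rexp ((a + b) * cos θ) := by simp_rw [norm_expLaurentIntegrand]

lemma expLaurentCoeff_le (a b : ℝ) (k : ℕ) (hab : 0 < a + b) :
    expLaurentCoeff a b k ≤ √(π / (8 * (a + b))) * rexp (a + b) := by
  have hsqrt : π * √(π / (2 * (a + b))) = 2 * π * √(π / (8 * (a + b))) := by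
    rw [show π / (2 * (a + b)) = 2 ^ 2 * (π / (8 * (a + b))) by field_simp; ring,
      Real.sqrt_mul (by positivity), Real.sqrt_sq zero_le_two]
    ring
  have := (expLaurentCoeff_le_intervalIntegral a b k).trans (intervalIntegral_exp_mul_cos_le hab)
  rw [hsqrt, mul_assoc (2 * π) √_] at this
  exact le_of_mul_le_mul_left this (by positivity)

theorem besselI_upper_bound (k : ℕ) (z : ℝ) (hz : 0 < z) :
    z ^ (-(k : ℤ)) * besselI k z ≤
      Real.sqrt (Real.pi / 8) * ((k : ℝ) ^ 2 + z ^ 2) ^ (-(1 / 4 : ℝ))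
        * ((k : ℝ) + Real.sqrt ((k : ℝ) ^ 2 + z ^ 2)) ^ (-(k : ℤ))
        * Real.exp (Real.sqrt ((k : ℝ) ^ 2 + z ^ 2)) := by
  have hu : 0 < (k : ℝ) ^ 2 + z ^ 2 := by positivity
  set s := √((k : ℝ) ^ 2 + z ^ 2)
  have hks : (k : ℝ) < s := (Real.lt_sqrt k.cast_nonneg).2 (by linarith [pow_pos hz 2])
  have hk : (0 : ℝ) ≤ k := k.cast_nonneg
  have hab : (k + s) / 2 * ((s - k) / 2) = (z / 2) ^ 2 := by
    linear_combination Real.sq_sqrt hu.le / 4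
  have hcoeff := expLaurentCoeff_le ((k + s) / 2) ((s - k) / 2) k (by linarith)
  rw [show (k + s) / 2 + (s - k) / 2 = s by ring, ← div_div] at hcoeff
  calc z ^ (-(k : ℤ)) * besselI k z
      = (k + s) ^ (-(k : ℤ)) * expLaurentCoeff ((k + s) / 2) ((s - k) / 2) k := by
        rw [besselI_eq_mul_expLaurentCoeff k hz.ne' (by linarith) hab, zpow_neg, zpow_neg,
          zpow_natCast, zpow_natCast, div_pow]
        field_simp
    _ ≤ (k + s) ^ (-(k : ℤ)) * (√(π / 8 / s) * rexp s) :=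
        mul_le_mul_of_nonneg_left hcoeff (by positivity)
    _ = _ := by rw [sqrt_div_sqrt_eq_mul_rpow _ hu.le]; ring
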